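/- Fix m ∈ ℕ, m ≥ 1, and let f_m(x) = 2·T_m(x/2) be the generalised logistic map of degree m, with derivative f_m'. Then the average Lyapunov exponent of f_m with respect to its invariant density D(x) = 1/(π·√(4−x²)) equals log m; that is, ∫_{−2}^{2} log|f_m'(x)| · (1/(π·√(4−x²))) dx = log m. -/

import Mathlib

open MeasureTheory

/-- The generalised logistic map of degree `m`: `f_m(x) = 2·T_m(x/2)`, where `T_m`
is the `m`-th Chebyshev polynomial of the first kind. -/
noncomputable def genLogistic (m : ℕ) (x : ℝ) : ℝ :=
  2 * (Polynomial.Chebyshev.T ℝ (m : ℤ)).eval (x / 2)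

/-!
Substituting `x = 2 cos θ` turns the density `1/(π √(4 - x²))` into the uniform density `1/π`
on `(0, π)`, and `f_m` is semiconjugate to `θ ↦ mθ`: `f_m (2 cos θ) = 2 cos (mθ)`.
Differentiating gives `f_m'(2 cos θ) sin θ = m sin (mθ)`, so the exponent is
`log m + (1/π) ∫₀^π (log |sin (mθ)| - log |sin θ|) dθ`, and the two integrals agree because
`log |sin|` is `π`-periodic and integrable.
-/

open Real Set Function

theorem Function.Periodic.intervalIntegral_comp_int_mul {E : Type*} [NormedAddCommGroup E]
    [NormedSpace ℝ E] {f : ℝ → E} {T : ℝ} (hf : Periodic f T)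
    (h_int : ∀ a b, IntervalIntegrable f volume a b) {n : ℤ} (hn : n ≠ 0) :
    ∫ x in 0..T, f (n * x) = ∫ x in 0..T, f x := by
  have hn' : (n : ℝ) ≠ 0 := Int.cast_ne_zero.2 hn
  rw [intervalIntegral.integral_comp_mul_left f hn', mul_zero, ← zero_add ((n : ℝ) * T),
    ← zsmul_eq_mul, hf.intervalIntegral_add_zsmul_eq n 0 h_int, zero_add,
    ← Int.cast_smul_eq_zsmul ℝ, smul_smul, inv_mul_cancel₀ hn', one_smul]

theorem intervalIntegrable_log_sin_mul (c a b : ℝ) :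
    IntervalIntegrable (fun θ => log (sin (c * θ))) volume a b := by
  have hsin : AnalyticOnNhd ℝ (fun θ => sin (c * θ)) (uIcc a b) := fun θ _ =>
    analyticAt_sin.comp (analyticAt_const.mul analyticAt_id)
  exact hsin.meromorphicOn.intervalIntegrable_log

theorem intervalIntegral_log_sin_nat_mul {n : ℕ} (hn : n ≠ 0) :
    ∫ θ in 0..π, log (sin (n * θ)) = ∫ θ in 0..π, log (sin θ) := by
  -- `sin (θ + π) = -sin θ` and `log` is even.
  have hper : Periodic (log ∘ sin) π := fun θ => by simp [sin_add_pi]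
  exact_mod_cast hper.intervalIntegral_comp_int_mul (fun _ _ => intervalIntegrable_log_sin)
    (Int.natCast_ne_zero.2 hn)

theorem ae_sin_nat_mul_ne_zero {n : ℕ} (hn : n ≠ 0) : ∀ᵐ θ : ℝ, sin (n * θ) ≠ 0 := by
  have hzeros : {θ : ℝ | sin (n * θ) = 0} ⊆ range (fun k : ℤ => k * π / n) := by
    intro θ hθ
    obtain ⟨k, hk⟩ := sin_eq_zero_iff.1 hθ
    exact ⟨k, by field_simp; linarith⟩
  rw [ae_iff]
  simpa using ((countable_range _).mono hzeros).measure_zero volume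

theorem image_two_mul_cos_Ioo : (fun θ => 2 * cos θ) '' Ioo 0 π = Ioo (-2) 2 := by
  have hcos : cos '' Ioo 0 π = Ioo (-1) 1 := cosPartialHomeomorph.image_source_eq_target
  rw [← image_image (2 * ·) cos, hcos, image_mul_left_Ioo two_pos]
  norm_num

theorem setIntegral_arcsine_density_eq_integral_two_mul_cos (g : ℝ → ℝ) :
    ∫ x in Ioo (-2 : ℝ) 2, g x * (1 / (π * √(4 - x ^ 2))) =
      π⁻¹ * ∫ θ in Ioo 0 π, g (2 * cos θ) := by
  have hderiv : ∀ θ ∈ Ioo 0 π,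
      HasDerivWithinAt (fun θ => 2 * cos θ) (2 * -sin θ) (Ioo 0 π) θ :=
    fun θ _ => ((hasDerivAt_cos θ).const_mul 2).hasDerivWithinAt
  have hinj : InjOn (fun θ => 2 * cos θ) (Ioo 0 π) := fun a ha b hb h =>
    injOn_cos (Ioo_subset_Icc_self ha) (Ioo_subset_Icc_self hb) (mul_left_cancel₀ two_ne_zero h)
  rw [← image_two_mul_cos_Ioo, integral_image_eq_integral_abs_deriv_smul measurableSet_Ioo
    hderiv hinj, ← integral_const_mul]
  refine setIntegral_congr_fun measurableSet_Ioo fun θ hθ => ?_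
  have hsin : 0 < sin θ := sin_pos_of_pos_of_lt_pi hθ.1 hθ.2
  have hsqrt : √(4 - (2 * cos θ) ^ 2) = 2 * sin θ := by
    rw [show 4 - (2 * cos θ) ^ 2 = (2 * sin θ) ^ 2 by nlinarith [sin_sq_add_cos_sq θ]]
    exact sqrt_sq (by positivity)
  rw [smul_eq_mul, hsqrt, abs_of_neg (by linarith)]
  field_simp

theorem genLogistic_two_mul_cos (m : ℕ) (θ : ℝ) :
    genLogistic m (2 * cos θ) = 2 * cos (m * θ) := by
  simp [genLogistic, Polynomial.Chebyshev.T_real_cos]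

theorem differentiable_genLogistic (m : ℕ) : Differentiable ℝ (genLogistic m) := by
  unfold genLogistic
  fun_prop

theorem deriv_genLogistic_two_mul_cos_mul_sin (m : ℕ) (θ : ℝ) :
    deriv (genLogistic m) (2 * cos θ) * sin θ = m * sin (m * θ) := by
  have hcomp : HasDerivAt (fun θ => genLogistic m (2 * cos θ))
      (deriv (genLogistic m) (2 * cos θ) * (2 * -sin θ)) θ :=
    (differentiable_genLogistic m _).hasDerivAt.comp θ ((hasDerivAt_cos θ).const_mul 2)
  simp only [genLogistic_two_mul_cos] at hcomp
  linarith [hcomp.unique ((((hasDerivAt_id' θ).const_mul (m : ℝ)).cos).const_mul 2)]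

theorem log_abs_deriv_genLogistic_two_mul_cos {m : ℕ} {θ : ℝ} (hθ : sin θ ≠ 0)
    (hmθ : sin (m * θ) ≠ 0) :
    log |deriv (genLogistic m) (2 * cos θ)| = log m + log (sin (m * θ)) - log (sin θ) := by
  have hm : (m : ℝ) ≠ 0 := by rintro h; simp [h] at hmθ
  have hd := deriv_genLogistic_two_mul_cos_mul_sin m θ
  have hd0 : deriv (genLogistic m) (2 * cos θ) ≠ 0 :=
    left_ne_zero_of_mul (hd ▸ mul_ne_zero hm hmθ)
  rw [eq_sub_iff_add_eq, log_abs, ← log_mul hd0 hθ, hd, log_mul hm hmθ]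

/-- The average Lyapunov exponent of the generalised logistic map
`f_m` with respect to its invariant density `D(x) = 1/(π·√(4−x²))` equals `log m`:
`∫_{−2}^{2} log|f_m'(x)|·(1/(π·√(4−x²))) dx = log m`. -/
theorem genLogistic_lyapunov_exponent (m : ℕ) (hm : 1 ≤ m) :
    (∫ x in Set.Ioo (-2 : ℝ) 2,
      Real.log |deriv (genLogistic m) x| * (1 / (Real.pi * Real.sqrt (4 - x ^ 2))))
      = Real.log m := by
  have hm0 : m ≠ 0 := by omega
  have hlog : ∀ᵐ θ ∂volume.restrict (Ioo 0 π),
      log |deriv (genLogistic m) (2 * cos θ)| = log m + log (sin (m * θ)) - log (sin θ) := by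
    rw [ae_restrict_iff' measurableSet_Ioo]
    filter_upwards [ae_sin_nat_mul_ne_zero hm0] with θ hmθ hθ
    exact log_abs_deriv_genLogistic_two_mul_cos (sin_pos_of_pos_of_lt_pi hθ.1 hθ.2).ne' hmθ
  rw [setIntegral_arcsine_density_eq_integral_two_mul_cos, integral_congr_ae hlog,
    ← integral_Ioc_eq_integral_Ioo, ← intervalIntegral.integral_of_le pi_pos.le,
    intervalIntegral.integral_sub, intervalIntegral.integral_add,
    intervalIntegral_log_sin_nat_mul hm0]
  · simp [pi_ne_zero]
  · exact intervalIntegrable_const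
  · exact intervalIntegrable_log_sin_mul _ _ _
  · exact intervalIntegrable_const.add (intervalIntegrable_log_sin_mul _ _ _)
  · exact intervalIntegrable_log_sin
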